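/- arXiv:2408.02517 — 2 statements merged into one kernel-verified Lean document; each statement's English description precedes it below -/
import Mathlib

section
/- Let γ = [v₁v₂v₃v₄v₅] be an integral pentagon (a closed curve with five unit edges), and suppose there exists a point z ∈ ℝ³ with |z − v₁| = |z − v₃| = |z − v₄| = 1 (such a z exists whenever the circumradius of the triangle [v₁v₃v₄] is less than 1). Then γ is cobordant to the union of the two unit rhombi [v₁v₂v₃z] and [v₁zv₄v₅]; a dome over γ ∪ [v₁v₂v₃z] ∪ [v₁zv₄v₅] is furnished by the single unit triangle [zv₃v₄] together with the paired boundary edges. -/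
/-
Common framework: integral curves (closed piecewise-linear curves in ℝ³ with
unit edges, possibly with several components), domes (piecewise-linear
surfaces all of whose faces are unit equilateral triangles, not necessarily
embedded, described combinatorially by a finite set of triangles with a
gluing pairing of triangle sides), boundaries, orientability, cobordism and
unit rhombi.
-/

noncomputable section

/-- Euclidean 3-space. -/
abbrev E3 : Type := EuclideanSpace ℝ (Fin 3)

/-- An *integral curve*: a finite disjoint union of closed polygonal curves in
`ℝ³` all of whose edges have unit length.  Component `j` is the closed polygon
with cyclically ordered vertices `vert j 0, …, vert j (len j - 1)`. -/
structure IntegralCurve where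
  c : ℕ
  len : Fin c → ℕ
  len_pos : ∀ j, 0 < len j
  vert : Fin c → ℕ → E3
  periodic : ∀ j i, vert j (i + len j) = vert j i
  unit : ∀ j i, dist (vert j i) (vert j (i + 1)) = 1

/-- The length `|γ|` of an integral curve: its total number of edges. -/
def IntegralCurve.length (γ : IntegralCurve) : ℕ := ∑ j, γ.len j

/-- The multiset of (undirected) edges of an integral curve. -/
def IntegralCurve.edges (γ : IntegralCurve) : Multiset (Sym2 E3) :=
  ∑ j, (Multiset.range (γ.len j)).map (fun i => s(γ.vert j i, γ.vert j (i + 1)))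

/-- A *dome*: a finite collection of unit equilateral triangles in `ℝ³`,
`face a 0, face a 1, face a 2` being the vertices of the `a`-th triangle,
together with a gluing matching some triangle sides in pairs (so that the
underlying combinatorial object is a surface, not necessarily embedded or
immersed); glued sides must coincide geometrically.  Side `(a, i)` of face `a`
is the segment from `face a i` to `face a (i + 1)` (indices mod 3). -/
structure Dome where
  N : ℕ
  face : Fin N → Fin 3 → E3
  unit : ∀ a i, dist (face a i) (face a (i + 1)) = 1
  glue : Fin N × Fin 3 → Option (Fin N × Fin 3)
  glue_symm : ∀ e e', glue e = some e' → glue e' = some e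
  glue_ne : ∀ e, glue e ≠ some e
  glue_geom : ∀ e e', glue e = some e' →
    s(face e.1 e.2, face e.1 (e.2 + 1)) = s(face e'.1 e'.2, face e'.1 (e'.2 + 1))

/-- The boundary of a dome: the multiset of unglued triangle sides. -/
def Dome.boundary (D : Dome) : Multiset (Sym2 E3) :=
  (Finset.univ.filter fun e : Fin D.N × Fin 3 => D.glue e = none).val.map
    (fun e => s(D.face e.1 e.2, D.face e.1 (e.2 + 1)))

/-- The directed edge of a triangle side, w.r.t. a choice of orientations of
the faces. -/
def Dome.dirEdge (D : Dome) (ori : Fin D.N → Bool) (e : Fin D.N × Fin 3) : E3 × E3 :=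
  if ori e.1 then (D.face e.1 e.2, D.face e.1 (e.2 + 1))
  else (D.face e.1 (e.2 + 1), D.face e.1 e.2)

/-- A dome is orientable if its faces can be coherently oriented, i.e. glued
sides are traversed in opposite directions. -/
def Dome.Orientable (D : Dome) : Prop :=
  ∃ ori : Fin D.N → Bool, ∀ e e', D.glue e = some e' →
    D.dirEdge ori e = Prod.swap (D.dirEdge ori e')

/-- A unit rhombus `[v₀v₁v₂v₃]`: a closed quadrilateral with four unit sides. -/
def UnitRhombus (v : Fin 4 → E3) : Prop := ∀ i, dist (v i) (v (i + 1)) = 1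

/-- The multiset of edges of a closed quadrilateral `[v₀v₁v₂v₃]`. -/
def rhombusEdges (v : Fin 4 → E3) : Multiset (Sym2 E3) :=
  (Finset.univ : Finset (Fin 4)).val.map (fun i => s(v i, v (i + 1)))

/-- An integral curve is planar if it lies in a plane `H ⊂ ℝ³`. -/
def IntegralCurve.Planar (γ : IntegralCurve) : Prop :=
  ∃ (w : E3) (r : ℝ), w ≠ 0 ∧ ∀ j i, (inner ℝ w (γ.vert j i) : ℝ) = r

/-- An integral curve is 2-packing if all of its vertices lie within distance
`2` of one of its vertices (the packing center). -/
def IntegralCurve.TwoPacking (γ : IntegralCurve) : Prop :=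
  ∃ (j₀ : Fin γ.c) (i₀ : ℕ), ∀ j i, dist (γ.vert j₀ i₀) (γ.vert j i) < 2

open scoped RealInnerProductSpace

lemma exists_orth' (w : E3) (hw : w ≠ 0) : ∃ u : E3, ‖u‖ = 1 ∧ ⟪w, u⟫ = 0 := by
  have h1 : Module.finrank ℝ (ℝ ∙ w) = 1 := finrank_span_singleton hw
  have h2 : Module.finrank ℝ E3 = 3 := by simp
  have h3 := Submodule.finrank_add_finrank_orthogonal (K := ℝ ∙ w)
  have hne : ((ℝ ∙ w)ᗮ : Submodule ℝ E3) ≠ ⊥ := by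
    intro hbot
    rw [hbot] at h3
    simp [h1, h2] at h3
  obtain ⟨u₀, hu₀m, hu₀⟩ := Submodule.exists_mem_ne_zero_of_ne_bot hne
  refine ⟨‖u₀‖⁻¹ • u₀, ?_, ?_⟩
  · simp [norm_smul, inv_mul_cancel₀ (norm_ne_zero_iff.2 hu₀)]
  · have h0 : ⟪w, u₀⟫ = 0 := by
      have h' := (Submodule.mem_orthogonal _ u₀).1 hu₀m w (Submodule.mem_span_singleton_self w)
      first | exact h' | (rw [real_inner_comm]; exact h')
    rw [inner_smul_right, h0, mul_zero]

lemma exists_apex' (a b : E3) (h : dist a b = 1) : ∃ c, dist a c = 1 ∧ dist b c = 1 := by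
  set w := b - a with hwdef
  have hw1 : ‖w‖ = 1 := by rw [hwdef, ← dist_eq_norm, dist_comm]; exact h
  have hw0 : w ≠ 0 := by intro h0; rw [h0] at hw1; simp at hw1
  obtain ⟨u, hu1, huw⟩ := exists_orth' w hw0
  refine ⟨a + (1/2 : ℝ) • w + (Real.sqrt 3 / 2) • u, ?_, ?_⟩
  · rw [dist_eq_norm]
    have : a - (a + (1/2 : ℝ) • w + (Real.sqrt 3 / 2) • u)
        = (-(1/2) : ℝ) • w + (-(Real.sqrt 3 / 2)) • u := by
      module
    rw [this]
    have hsq : ‖((-(1/2) : ℝ)) • w + (-(Real.sqrt 3 / 2)) • u‖ ^ 2 = 1 := by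
      rw [norm_add_sq_real]
      rw [inner_smul_left, inner_smul_right, huw]
      rw [norm_smul, norm_smul, hw1, hu1]
      have h3 : Real.sqrt 3 ^ 2 = 3 := Real.sq_sqrt (by norm_num)
      simp only [Real.norm_eq_abs]
      rw [abs_of_nonpos (by norm_num), abs_of_nonpos (neg_nonpos.mpr (by positivity))]
      ring_nf
      nlinarith [h3]
    nlinarith [norm_nonneg (((-(1/2) : ℝ)) • w + (-(Real.sqrt 3 / 2)) • u)]
  · rw [dist_eq_norm]
    have : b - (a + (1/2 : ℝ) • w + (Real.sqrt 3 / 2) • u)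
        = ((1/2) : ℝ) • w + (-(Real.sqrt 3 / 2)) • u := by
      rw [hwdef]; module
    rw [this]
    have hsq : ‖(((1/2) : ℝ)) • w + (-(Real.sqrt 3 / 2)) • u‖ ^ 2 = 1 := by
      rw [norm_add_sq_real]
      rw [inner_smul_left, inner_smul_right, huw]
      rw [norm_smul, norm_smul, hw1, hu1]
      have h3 : Real.sqrt 3 ^ 2 = 3 := Real.sq_sqrt (by norm_num)
      simp only [Real.norm_eq_abs]
      rw [abs_of_nonneg (by norm_num), abs_of_nonpos (neg_nonpos.mpr (by positivity))]
      ring_nf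
      nlinarith [h3]
    nlinarith [norm_nonneg ((((1/2) : ℝ)) • w + (-(Real.sqrt 3 / 2)) • u)]

def pSwap : Fin 11 → Fin 11 := ![0, 2, 1, 4, 3, 6, 5, 8, 7, 10, 9]

def bigGlue : Fin 11 × Fin 3 → Option (Fin 11 × Fin 3) :=
  fun e => if e.1 = 0 ∨ e.2 = 0 then none else some (pSwap e.1, e.2)

lemma bigGlue_symm : ∀ e e', bigGlue e = some e' → bigGlue e' = some e := by decide
lemma bigGlue_ne : ∀ e, bigGlue e ≠ some e := by decide
lemma bigGlue_spec : ∀ e e', bigGlue e = some e' → e' = (pSwap e.1, e.2) := by decide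

def bigDome (T A0 A1 A2 A3 A4 : Fin 3 → E3)
    (hT : ∀ i, dist (T i) (T (i+1)) = 1)
    (h0 : ∀ i, dist (A0 i) (A0 (i+1)) = 1)
    (h1 : ∀ i, dist (A1 i) (A1 (i+1)) = 1)
    (h2 : ∀ i, dist (A2 i) (A2 (i+1)) = 1)
    (h3 : ∀ i, dist (A3 i) (A3 (i+1)) = 1)
    (h4 : ∀ i, dist (A4 i) (A4 (i+1)) = 1) : Dome where
  N := 11
  face := ![T, A0, A0, A1, A1, A2, A2, A3, A3, A4, A4]
  unit := fun a i => by
    fin_cases a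
    exacts [hT i, h0 i, h0 i, h1 i, h1 i, h2 i, h2 i, h3 i, h3 i, h4 i, h4 i]
  glue := bigGlue
  glue_symm := bigGlue_symm
  glue_ne := bigGlue_ne
  glue_geom := fun e e' h => by
    obtain rfl := bigGlue_spec e e' h
    have key : ∀ i : Fin 11,
        (![T, A0, A0, A1, A1, A2, A2, A3, A3, A4, A4] : Fin 11 → Fin 3 → E3) (pSwap i)
          = ![T, A0, A0, A1, A1, A2, A2, A3, A3, A4, A4] i := by
      intro i; fin_cases i <;> rfl
    rw [key]


/-- A dome made of a single unit triangle, nothing glued. -/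
def triDome (T : Fin 3 → E3) (hT : ∀ i, dist (T i) (T (i+1)) = 1) : Dome where
  N := 1
  face := fun _ => T
  unit := fun _ i => hT i
  glue := fun _ => none
  glue_symm := fun _ _ h => by simp at h
  glue_ne := fun _ h => by simp at h
  glue_geom := fun _ _ h => by simp at h

lemma triDome_boundary (T : Fin 3 → E3) (hT : ∀ i, dist (T i) (T (i+1)) = 1) :
    (triDome T hT).boundary = {s(T 0, T 1), s(T 1, T 2), s(T 2, T 0)} := rfl

lemma bigDome_boundary (T A0 A1 A2 A3 A4 : Fin 3 → E3)
    (hT : ∀ i, dist (T i) (T (i+1)) = 1)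
    (h0 : ∀ i, dist (A0 i) (A0 (i+1)) = 1)
    (h1 : ∀ i, dist (A1 i) (A1 (i+1)) = 1)
    (h2 : ∀ i, dist (A2 i) (A2 (i+1)) = 1)
    (h3 : ∀ i, dist (A3 i) (A3 (i+1)) = 1)
    (h4 : ∀ i, dist (A4 i) (A4 (i+1)) = 1) :
    (bigDome T A0 A1 A2 A3 A4 hT h0 h1 h2 h3 h4).boundary =
      ↑[s(T 0, T 1), s(T 1, T 2), s(T 2, T 0),
        s(A0 0, A0 1), s(A0 0, A0 1), s(A1 0, A1 1), s(A1 0, A1 1),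
        s(A2 0, A2 1), s(A2 0, A2 1), s(A3 0, A3 1), s(A3 0, A3 1),
        s(A4 0, A4 1), s(A4 0, A4 1)] := rfl


/-- Let `γ = [v₁v₂v₃v₄v₅]` be an integral pentagon (here
`v₁ = v 0, …, v₅ = v 4`) and let `z` be a point at unit distance from
`v₁, v₃, v₄`.  Then `[v₁v₂v₃z]` and `[v₁zv₄v₅]` are unit rhombi, `γ` is
cobordant to their union, and a dome over `γ ∪ [v₁v₂v₃z] ∪ [v₁zv₄v₅]` is
furnished by the single unit triangle `[zv₃v₄]` together with paired boundary
edges (a multiset `P` of edges, each occurring twice). -/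
theorem pentagon_cobordant_to_two_rhombi (v : Fin 5 → E3)
    (hγ : ∀ i, dist (v i) (v (i + 1)) = 1)
    (z : E3) (hz1 : dist z (v 0) = 1) (hz3 : dist z (v 2) = 1)
    (hz4 : dist z (v 3) = 1) :
    UnitRhombus ![v 0, v 1, v 2, z] ∧ UnitRhombus ![v 0, z, v 3, v 4] ∧
    (∃ D : Dome, D.boundary =
        ((Finset.univ : Finset (Fin 5)).val.map fun i => s(v i, v (i + 1)))
          + rhombusEdges ![v 0, v 1, v 2, z] + rhombusEdges ![v 0, z, v 3, v 4]) ∧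
    (∃ (D : Dome) (P : Multiset (Sym2 E3)), D.N = 1 ∧
        (∀ a i, D.face a i = ![z, v 2, v 3] i) ∧
        D.boundary + P + P =
          ((Finset.univ : Finset (Fin 5)).val.map fun i => s(v i, v (i + 1)))
            + rhombusEdges ![v 0, v 1, v 2, z] + rhombusEdges ![v 0, z, v 3, v 4]) := by
  have e01 : dist (v 0) (v 1) = 1 := hγ 0
  have e12 : dist (v 1) (v 2) = 1 := hγ 1
  have e23 : dist (v 2) (v 3) = 1 := hγ 2
  have e34 : dist (v 3) (v 4) = 1 := hγ 3
  have e40 : dist (v 4) (v 0) = 1 := hγ 4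
  have ez0 : dist z (v 0) = 1 := hz1
  -- the triangle [z, v2, v3]
  have hT : ∀ i, dist (![z, v 2, v 3] i) (![z, v 2, v 3] (i+1)) = 1 := by
    intro i
    fin_cases i
    · exact hz3
    · exact e23
    · exact (dist_comm z (v 3)) ▸ hz4
  -- apexes for the five doubled edges
  obtain ⟨c0, hc0a, hc0b⟩ := exists_apex' (v 0) (v 1) e01
  obtain ⟨c1, hc1a, hc1b⟩ := exists_apex' (v 1) (v 2) e12
  obtain ⟨c2, hc2a, hc2b⟩ := exists_apex' z (v 0) ez0
  obtain ⟨c3, hc3a, hc3b⟩ := exists_apex' (v 3) (v 4) e34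
  obtain ⟨c4, hc4a, hc4b⟩ := exists_apex' (v 4) (v 0) e40
  have hA0 : ∀ i, dist (![v 0, v 1, c0] i) (![v 0, v 1, c0] (i+1)) = 1 := by
    intro i; fin_cases i
    · exact e01
    · exact (dist_comm (v 1) c0) ▸ hc0b
    · exact (dist_comm c0 (v 0)) ▸ hc0a
  have hA1 : ∀ i, dist (![v 1, v 2, c1] i) (![v 1, v 2, c1] (i+1)) = 1 := by
    intro i; fin_cases i
    · exact e12
    · exact (dist_comm (v 2) c1) ▸ hc1b
    · exact (dist_comm c1 (v 1)) ▸ hc1a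
  have hA2 : ∀ i, dist (![z, v 0, c2] i) (![z, v 0, c2] (i+1)) = 1 := by
    intro i; fin_cases i
    · exact ez0
    · exact (dist_comm (v 0) c2) ▸ hc2b
    · exact (dist_comm c2 z) ▸ hc2a
  have hA3 : ∀ i, dist (![v 3, v 4, c3] i) (![v 3, v 4, c3] (i+1)) = 1 := by
    intro i; fin_cases i
    · exact e34
    · exact (dist_comm (v 4) c3) ▸ hc3b
    · exact (dist_comm c3 (v 3)) ▸ hc3a
  have hA4 : ∀ i, dist (![v 4, v 0, c4] i) (![v 4, v 0, c4] (i+1)) = 1 := by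
    intro i; fin_cases i
    · exact e40
    · exact (dist_comm (v 0) c4) ▸ hc4b
    · exact (dist_comm c4 (v 4)) ▸ hc4a
  -- Sym2 swap identities
  have sw1 : s(v 2, z) = s(z, v 2) := Sym2.eq_swap
  have sw2 : s(v 0, z) = s(z, v 0) := Sym2.eq_swap
  have sw3 : s(z, v 3) = s(v 3, z) := Sym2.eq_swap
  refine ⟨?_, ?_, ?_, ?_⟩
  · intro i
    fin_cases i
    · exact e01
    · exact e12
    · exact (dist_comm z (v 2)) ▸ hz3
    · exact ez0
  · intro i
    fin_cases i
    · exact (dist_comm z (v 0)) ▸ ez0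
    · exact hz4
    · exact e34
    · exact e40
  · refine ⟨bigDome ![z, v 2, v 3] ![v 0, v 1, c0] ![v 1, v 2, c1] ![z, v 0, c2]
      ![v 3, v 4, c3] ![v 4, v 0, c4] hT hA0 hA1 hA2 hA3 hA4, ?_⟩
    rw [bigDome_boundary]
    show ({s(z, v 2), s(v 2, v 3), s(v 3, z),
        s(v 0, v 1), s(v 0, v 1), s(v 1, v 2), s(v 1, v 2),
        s(z, v 0), s(z, v 0), s(v 3, v 4), s(v 3, v 4),
        s(v 4, v 0), s(v 4, v 0)} : Multiset (Sym2 E3)) =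
      ({s(v 0, v 1), s(v 1, v 2), s(v 2, v 3), s(v 3, v 4), s(v 4, v 0)} : Multiset (Sym2 E3))
        + {s(v 0, v 1), s(v 1, v 2), s(v 2, z), s(z, v 0)}
        + {s(v 0, z), s(z, v 3), s(v 3, v 4), s(v 4, v 0)}
    rw [sw1, sw2, sw3]
    simp only [Multiset.insert_eq_cons, ← Multiset.singleton_add]
    abel
  · refine ⟨triDome ![z, v 2, v 3] hT,
      ({s(v 0, v 1), s(v 1, v 2), s(z, v 0), s(v 3, v 4), s(v 4, v 0)} : Multiset (Sym2 E3)), rfl,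
      fun a i => rfl, ?_⟩
    rw [triDome_boundary]
    show (({s(z, v 2), s(v 2, v 3), s(v 3, z)} : Multiset (Sym2 E3))
        + {s(v 0, v 1), s(v 1, v 2), s(z, v 0), s(v 3, v 4), s(v 4, v 0)}
        + {s(v 0, v 1), s(v 1, v 2), s(z, v 0), s(v 3, v 4), s(v 4, v 0)}) =
      ({s(v 0, v 1), s(v 1, v 2), s(v 2, v 3), s(v 3, v 4), s(v 4, v 0)} : Multiset (Sym2 E3))
        + {s(v 0, v 1), s(v 1, v 2), s(v 2, z), s(z, v 0)}
        + {s(v 0, z), s(z, v 3), s(v 3, v 4), s(v 4, v 0)}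
    rw [sw1, sw2, sw3]
    simp only [Multiset.insert_eq_cons, ← Multiset.singleton_add]
    abel
end
end

section
/- Let H ⊂ ℝ³ be a plane and let u, v, w ∈ ℝ³ lie in a closed half-space bounded by H, with |u − v| = |v − w| = 1. Suppose dist(u, H) < dist(v, H) and dist(w, H) ≤ dist(v, H). Then there exists a point v' ∈ ℝ³ with |u − v'| = |w − v'| = 1 and dist(v', H) ≤ dist(u, H). -/
/-
The rhombus-pivot step: a point `v` at unit distance from `u` and `w`, lying
(together with `u, w`) in a closed half-space bounded by a plane `H` and
strictly further from `H` than `u` and at least as far from `H` as `w`, can be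
replaced by a point `v'` of the circle `B₁(u) ∩ B₁(w)` which is at least as
close to `H` as `u` is.  The plane `H` is `{x | ⟪n, x⟫ = r}` for a nonzero
normal vector `n`, and the closed half-space bounded by it is
`{x | ⟪n, x⟫ ≥ r}`; distances to `H` are `Metric.infDist`.
-/

noncomputable section

lemma infDist_hyperplane {F : Type*} [NormedAddCommGroup F] [InnerProductSpace ℝ F]
    {n : F} (hn : n ≠ 0) (r : ℝ) (x : F) :
    Metric.infDist x {y : F | (inner ℝ n y : ℝ) = r} = |(inner ℝ n x : ℝ) - r| / ‖n‖ := by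
  have hn' : (0:ℝ) < ‖n‖ := norm_pos_iff.mpr hn
  set s : ℝ := (inner ℝ n x : ℝ) - r with hs
  have hproj : (inner ℝ n (x - (s / ‖n‖^2) • n) : ℝ) = r := by
    rw [inner_sub_right, real_inner_smul_right, real_inner_self_eq_norm_sq]
    field_simp
    ring
  have hne : Set.Nonempty {y : F | (inner ℝ n y : ℝ) = r} := ⟨_, hproj⟩
  apply le_antisymm
  · calc Metric.infDist x {y : F | (inner ℝ n y : ℝ) = r}
        ≤ dist x (x - (s/‖n‖^2) • n) := Metric.infDist_le_dist_of_mem hproj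
      _ = |s|/‖n‖ := by
          rw [dist_eq_norm, sub_sub_cancel, norm_smul]
          rw [Real.norm_eq_abs, abs_div, abs_pow, abs_norm]
          field_simp
  · by_contra h
    push_neg at h
    obtain ⟨y, hy, hlt⟩ := (Metric.infDist_lt_iff hne).mp h
    have h1 : |s| = |(inner ℝ n (x - y) : ℝ)| := by
      rw [inner_sub_right, hy]
    have h2 : |(inner ℝ n (x - y) : ℝ)| ≤ ‖n‖ * ‖x - y‖ := abs_real_inner_le_norm n (x - y)
    rw [dist_eq_norm] at hlt
    have h3 : |s| / ‖n‖ ≤ ‖x - y‖ := by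
      rw [div_le_iff₀ hn'] at *
      rw [h1]
      calc |(inner ℝ n (x - y) : ℝ)| ≤ ‖n‖ * ‖x - y‖ := h2
        _ = ‖x - y‖ * ‖n‖ := by ring
    linarith

/-- Cross product on `E3`. -/
def cross3 (x y : E3) : E3 :=
  (WithLp.equiv 2 (Fin 3 → ℝ)).symm
    ![x 1 * y 2 - x 2 * y 1, x 2 * y 0 - x 0 * y 2, x 0 * y 1 - x 1 * y 0]

lemma cross3_apply (x y : E3) (i : Fin 3) : cross3 x y i =
    ![x 1 * y 2 - x 2 * y 1, x 2 * y 0 - x 0 * y 2, x 0 * y 1 - x 1 * y 0] i := rfl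

lemma inner_cross_left (x y : E3) : (inner ℝ x (cross3 x y) : ℝ) = 0 := by
  simp [PiLp.inner_apply, cross3_apply, Fin.sum_univ_three]; ring

lemma inner_cross_right (x y : E3) : (inner ℝ y (cross3 x y) : ℝ) = 0 := by
  simp [PiLp.inner_apply, cross3_apply, Fin.sum_univ_three]; ring

lemma inner_cross_self (x y : E3) :
    (inner ℝ (cross3 x y) (cross3 x y) : ℝ)
      = (inner ℝ x x : ℝ) * (inner ℝ y y : ℝ) - (inner ℝ x y : ℝ)^2 := by
  simp [PiLp.inner_apply, cross3_apply, Fin.sum_univ_three, -inner_self_eq_norm_sq_to_K]; ring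

set_option maxHeartbeats 1000000 in
/-- the pivot step used to flatten an integral path onto a
plane. -/
theorem pivot_step (n : E3) (hn : n ≠ 0) (r : ℝ) (u v w : E3)
    (hu : r ≤ (inner ℝ n u : ℝ)) (hv : r ≤ (inner ℝ n v : ℝ))
    (hw : r ≤ (inner ℝ n w : ℝ))
    (huv : dist u v = 1) (hvw : dist v w = 1)
    (hltu : Metric.infDist u {x : E3 | (inner ℝ n x : ℝ) = r} <
            Metric.infDist v {x : E3 | (inner ℝ n x : ℝ) = r})
    (hlew : Metric.infDist w {x : E3 | (inner ℝ n x : ℝ) = r} ≤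
            Metric.infDist v {x : E3 | (inner ℝ n x : ℝ) = r}) :
    ∃ v' : E3, dist u v' = 1 ∧ dist w v' = 1 ∧
      Metric.infDist v' {x : E3 | (inner ℝ n x : ℝ) = r} ≤
        Metric.infDist u {x : E3 | (inner ℝ n x : ℝ) = r} := by
  have hn' : (0:ℝ) < ‖n‖ := norm_pos_iff.mpr hn
  set a : ℝ := (inner ℝ n u : ℝ) with ha
  set b : ℝ := (inner ℝ n v : ℝ) with hb
  set c : ℝ := (inner ℝ n w : ℝ) with hc
  rw [infDist_hyperplane hn, infDist_hyperplane hn] at hltu hlew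
  rw [abs_of_nonneg (by linarith : (0:ℝ) ≤ a - r),
      abs_of_nonneg (by linarith : (0:ℝ) ≤ b - r)] at hltu
  rw [abs_of_nonneg (by linarith : (0:ℝ) ≤ c - r),
      abs_of_nonneg (by linarith : (0:ℝ) ≤ b - r)] at hlew
  have hab : a < b := by
    have := (div_lt_div_iff_of_pos_right hn').mp hltu; linarith
  have hcb : c ≤ b := by
    have := (div_le_div_iff_of_pos_right hn').mp hlew; linarith
  -- reduce the goal to producing `v'` with `⟪n, v'⟫ = a`
  suffices hsuff : ∃ v' : E3, dist u v' = 1 ∧ dist w v' = 1 ∧ (inner ℝ n v' : ℝ) = a by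
    obtain ⟨v', h1, h2, h3⟩ := hsuff
    refine ⟨v', h1, h2, ?_⟩
    rw [infDist_hyperplane hn, infDist_hyperplane hn, h3]
  have hnormsq : ∀ x : E3, (inner ℝ x x : ℝ) = ‖x‖^2 := fun x => real_inner_self_eq_norm_sq x
  by_cases huw : u = w
  · -- pick a unit vector orthogonal to `n`
    have hne_top : (ℝ ∙ n) ≠ ⊤ := by
      intro h
      have h1 : Module.finrank ℝ (ℝ ∙ n) = 1 := finrank_span_singleton hn
      have h2 : Module.finrank ℝ (⊤ : Submodule ℝ E3) = 3 := by
        simp [finrank_euclideanSpace]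
      rw [h] at h1
      rw [h1] at h2
      norm_num at h2
    have hbot : (ℝ ∙ n)ᗮ ≠ ⊥ := by
      intro h
      exact hne_top (Submodule.orthogonal_eq_bot_iff.mp h)
    obtain ⟨e0, he0mem, he0⟩ := Submodule.exists_mem_ne_zero_of_ne_bot hbot
    have he0n : (inner ℝ n e0 : ℝ) = 0 :=
      he0mem n (Submodule.mem_span_singleton_self n)
    set e : E3 := ‖e0‖⁻¹ • e0 with he
    have hene : ‖e‖ = 1 := by
      rw [he, norm_smul, norm_inv, norm_norm, inv_mul_cancel₀ (norm_ne_zero_iff.mpr he0)]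
    refine ⟨u + e, ?_, ?_, ?_⟩
    · rw [dist_eq_norm]
      simpa using hene
    · rw [← huw, dist_eq_norm]
      simpa using hene
    · rw [inner_add_right, he, real_inner_smul_right, he0n]
      simp [ha]
  · -- main case: rotate `v` around the axis through `u` and `w`
    obtain ⟨d, hd⟩ : ∃ d : E3, d = (2:ℝ)⁻¹ • (w - u) := ⟨_, rfl⟩
    obtain ⟨p, hp⟩ : ∃ p : E3, p = v - u - d := ⟨_, rfl⟩
    have hvu : v - u = p + d := by rw [hp]; abel
    have hwu : w - u = (2:ℝ) • d := by rw [hd]; module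
    have hvw' : v - w = p - d := by
      have : v - w = (v - u) - (w - u) := by abel
      rw [this, hvu, hwu]; module
    have hnu : ‖p + d‖ = 1 := by
      rw [← hvu, ← norm_sub_rev, ← dist_eq_norm]; exact huv
    have hnw : ‖p - d‖ = 1 := by
      rw [← hvw', ← dist_eq_norm]; exact hvw
    have hexp1 : ‖p + d‖^2 = ‖p‖^2 + 2 * (inner ℝ p d : ℝ) + ‖d‖^2 := norm_add_sq_real p d
    have hexp2 : ‖p - d‖^2 = ‖p‖^2 - 2 * (inner ℝ p d : ℝ) + ‖d‖^2 := norm_sub_sq_real p d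
    rw [hnu] at hexp1
    rw [hnw] at hexp2
    have hpd : (inner ℝ p d : ℝ) = 0 := by nlinarith
    have hsum : ‖p‖^2 + ‖d‖^2 = 1 := by nlinarith
    have hdne : d ≠ 0 := by
      rw [hd]
      simp only [ne_eq, smul_eq_zero, sub_eq_zero]
      push_neg
      exact ⟨by norm_num, fun h => huw h.symm⟩
    have hnd : (inner ℝ n d : ℝ) = (c - a) / 2 := by
      rw [hd, real_inner_smul_right, inner_sub_right]
      rw [← hc, ← ha]; ring
    have hnp : (inner ℝ n p : ℝ) = b - (a + c) / 2 := by
      rw [hp, inner_sub_right, inner_sub_right, hnd, ← hb, ← ha]; ring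
    have hpne : p ≠ 0 := by
      intro h
      rw [h] at hnp
      simp at hnp
      linarith
    obtain ⟨q, hq⟩ : ∃ q : E3, q = ‖d‖⁻¹ • cross3 d p := ⟨_, rfl⟩
    have hdq : (inner ℝ d q : ℝ) = 0 := by
      rw [hq, real_inner_smul_right, inner_cross_left]; ring
    have hpq : (inner ℝ p q : ℝ) = 0 := by
      rw [hq, real_inner_smul_right, inner_cross_right]; ring
    have hqq : (inner ℝ q q : ℝ) = ‖p‖^2 := by
      rw [hq, real_inner_smul_right, real_inner_smul_left, inner_cross_self]
      have hdp0 : (inner ℝ d p : ℝ) = 0 := by rw [real_inner_comm]; exact hpd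
      rw [hnormsq d, hnormsq p, hdp0]
      have : ‖d‖ ≠ 0 := norm_ne_zero_iff.mpr hdne
      field_simp
      ring
    -- the function giving the inner product along the circle
    obtain ⟨g, hg⟩ : ∃ g : ℝ → ℝ, g = fun t => (a + (c - a)/2) + Real.cos t * (inner ℝ n p : ℝ)
        + Real.sin t * (inner ℝ n q : ℝ) := ⟨_, rfl⟩
    have hgc : ContinuousOn g (Set.Icc 0 Real.pi) := by
      rw [hg]
      apply Continuous.continuousOn
      fun_prop
    have hg0 : g 0 = b := by simp [hg, hnp]; ring
    have hgpi : g Real.pi = a + c - b := by simp [hg, hnp]; ring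
    have hmem : a ∈ Set.Icc (g Real.pi) (g 0) := by
      rw [hg0, hgpi]
      constructor <;> linarith
    obtain ⟨t, _, hgt⟩ := intermediate_value_Icc' Real.pi_nonneg hgc hmem
    obtain ⟨v', hv'⟩ : ∃ v' : E3, v' = u + d + Real.cos t • p + Real.sin t • q := ⟨_, rfl⟩
    have hinner : (inner ℝ n v' : ℝ) = g t := by
      rw [hv', hg]
      simp only [inner_add_right, real_inner_smul_right]
      rw [hnd, ← ha]
    -- norms
    have hkey : ∀ (s : ℝ) (x : E3), x = s • d + Real.cos t • p + Real.sin t • q → s^2 = 1 →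
        ‖x‖ = 1 := by
      intro s x hx hs
      have hxx : (inner ℝ x x : ℝ) = 1 := by
        rw [hx]
        simp only [inner_add_left, inner_add_right, real_inner_smul_left,
          real_inner_smul_right]
        have hdp' : (inner ℝ d p : ℝ) = 0 := by rw [real_inner_comm]; exact hpd
        have hqd' : (inner ℝ q d : ℝ) = 0 := by rw [real_inner_comm]; exact hdq
        have hqp' : (inner ℝ q p : ℝ) = 0 := by rw [real_inner_comm]; exact hpq
        rw [hpd, hdp', hdq, hqd', hpq, hqp', hqq, hnormsq d, hnormsq p]
        have htrig := Real.sin_sq_add_cos_sq t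
        nlinarith [hsum]
      rw [hnormsq] at hxx
      nlinarith [norm_nonneg x]
    refine ⟨v', ?_, ?_, by rw [hinner, hgt]⟩
    · rw [dist_eq_norm, ← norm_sub_rev]
      apply hkey 1
      · rw [hv']; module
      · norm_num
    · rw [dist_eq_norm, ← norm_sub_rev]
      apply hkey (-1)
      · rw [hv']
        have : w = u + (2:ℝ) • d := by
          rw [← hwu]; abel
        rw [this]; module
      · norm_num
end
end
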